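/- Let α ∈ [0,1)∖{1/2} and define f : (0,∞)∖{1} → ℝ by f(t) = |t−1|^{4α−2} + (t+1)^{4α−2} − 2(t²+1)·(t^{2α}−1)²/(t²−1)². There exists C > 0, depending only on α, such that: f(t) ≤ C·t^{2α} for all 0 < t < 1/2; f(t) ≤ C·|t−1|^{4α−2} for all t ∈ [1/2,2] with t ≠ 1; and f(t) ≤ C·t^{2α−2} for all t > 2. -/

import Mathlib

/-!
For `t < 1/2` the two power terms sum to `2 + O(t²)`, because the second derivative of `x ↦ x ^ p`
is bounded on `[1/2, 3/2]` when `|p| ≤ 2`, while the subtracted term is at least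
`2 (1 - t^{2α})² ≥ 2 - 4 t^{2α}`; as `t² ≤ t^{2α}`, this gives `f(t) = O(t^{2α})`.
The substitution `t ↦ 1/t` multiplies `f` by `t^{4α-2}` and turns this into the bound for `t > 2`.
Near `t = 1`: if `α < 1/2`, then `|t - 1|^{4α-2} ≥ 1` dominates; if `α > 1/2`, then
`f(t) → 2^{4α-2} - 4α² < 0` as `t → 1` (Bernoulli), so `f < 0` near `1`, and away from `1`
the weight `|t - 1|^{4α-2}` is bounded below.
-/

/-- The function
`f(t) = |t−1|^{4α−2} + (t+1)^{4α−2} − 2(t²+1)(t^{2α}−1)²/(t²−1)²` from the Appendix. -/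
noncomputable def ffun (α t : ℝ) : ℝ :=
  |t - 1| ^ (4 * α - 2) + (t + 1) ^ (4 * α - 2) -
    2 * (t ^ 2 + 1) * (t ^ (2 * α) - 1) ^ 2 / (t ^ 2 - 1) ^ 2

open Real Set Filter Topology

lemma convexOn_mul_sq_sub_rpow {p : ℝ} (hp1 : -2 ≤ p) (hp2 : p ≤ 2) :
    ConvexOn ℝ (Icc (1 / 2 : ℝ) (3 / 2)) (fun x => 48 * x ^ 2 - x ^ p) := by
  refine convexOn_of_hasDerivWithinAt2_nonneg (convex_Icc _ _)
    (f' := fun x => 96 * x - p * x ^ (p - 1)) (f'' := fun x => 96 - p * (p - 1) * x ^ (p - 2))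
    ?_ ?_ ?_ ?_
  · exact ContinuousOn.sub (by fun_prop) fun x hx =>
      (continuousAt_rpow_const x p (Or.inl (by linarith [hx.1]))).continuousWithinAt
  · rw [interior_Icc]
    rintro x ⟨hx, -⟩
    have hx0 : x ≠ 0 := by linarith
    refine (((hasDerivAt_pow 2 x).const_mul 48).sub (hasDerivAt_rpow_const (Or.inl hx0))
      |>.congr_deriv ?_).hasDerivWithinAt
    ring
  · rw [interior_Icc]
    rintro x ⟨hx, -⟩
    have hx0 : x ≠ 0 := by linarith
    refine (((hasDerivAt_id x).const_mul 96).sub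
      ((hasDerivAt_rpow_const (p := p - 1) (Or.inl hx0)).const_mul p)
      |>.congr_deriv ?_).hasDerivWithinAt
    rw [show p - 2 = p - 1 - 1 by ring]
    ring
  · rw [interior_Icc]
    rintro x ⟨hx, -⟩
    have hxp : x ^ (p - 2) ≤ 16 := calc
      x ^ (p - 2) ≤ (1 / 2 : ℝ) ^ (p - 2) :=
        rpow_le_rpow_of_nonpos (by norm_num) hx.le (by linarith)
      _ ≤ (1 / 2 : ℝ) ^ (-4 : ℝ) :=
        rpow_le_rpow_of_exponent_ge (by norm_num) (by norm_num) (by linarith)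
      _ = 16 := by norm_num [rpow_neg]
    have hp : p * (p - 1) ≤ 6 := by nlinarith
    nlinarith [mul_le_mul_of_nonneg_right hp (rpow_pos_of_pos (by linarith : 0 < x) (p - 2)).le]

lemma rpow_one_sub_add_rpow_one_add_le {p : ℝ} (hp1 : -2 ≤ p) (hp2 : p ≤ 2) {t : ℝ}
    (ht0 : 0 ≤ t) (ht : t ≤ 1 / 2) :
    (1 - t) ^ p + (1 + t) ^ p ≤ 2 + 96 * t ^ 2 := by
  have hmid := (convexOn_mul_sq_sub_rpow hp1 hp2).2
    (⟨by linarith, by linarith⟩ : 1 - t ∈ Icc (1 / 2 : ℝ) (3 / 2))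
    (⟨by linarith, by linarith⟩ : 1 + t ∈ Icc (1 / 2 : ℝ) (3 / 2))
    (by norm_num : (0 : ℝ) ≤ 1 / 2) (by norm_num : (0 : ℝ) ≤ 1 / 2) (by norm_num)
  simp only [smul_eq_mul, show 1 / 2 * (1 - t) + 1 / 2 * (1 + t) = 1 by ring, one_rpow] at hmid
  nlinarith

lemma sq_one_sub_le_mul_div_sq_sub_one {t : ℝ} (ht : t ^ 2 < 1) (u : ℝ) :
    (1 - u) ^ 2 ≤ (t ^ 2 + 1) * (u - 1) ^ 2 / (t ^ 2 - 1) ^ 2 := by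
  rw [le_div_iff₀ (by nlinarith)]
  have h : (t ^ 2 - 1) ^ 2 ≤ t ^ 2 + 1 := by nlinarith
  nlinarith [mul_le_mul_of_nonneg_left h (sq_nonneg (u - 1))]

lemma ffun_le_of_lt_half {α : ℝ} (hα0 : 0 ≤ α) (hα1 : α ≤ 1) {t : ℝ} (ht0 : 0 < t)
    (ht : t < 1 / 2) : ffun α t ≤ 100 * t ^ (2 * α) := by
  have hpow : |t - 1| ^ (4 * α - 2) + (t + 1) ^ (4 * α - 2) ≤ 2 + 96 * t ^ 2 := by
    rw [abs_of_neg (by linarith), neg_sub, add_comm t]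
    exact rpow_one_sub_add_rpow_one_add_le (by linarith) (by linarith) ht0.le ht.le
  have hsub := sq_one_sub_le_mul_div_sq_sub_one (by nlinarith : t ^ 2 < 1) (t ^ (2 * α))
  have hsq : t ^ 2 ≤ t ^ (2 * α) := by
    simpa using rpow_le_rpow_of_exponent_ge ht0 (by linarith) (by linarith : 2 * α ≤ 2)
  have hu0 : 0 < t ^ (2 * α) := rpow_pos_of_pos ht0 _
  unfold ffun
  rw [mul_assoc, mul_div_assoc]
  nlinarith

lemma ffun_eq_rpow_mul_ffun_inv (α : ℝ) {t : ℝ} (ht : 0 < t) :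
    ffun α t = t ^ (4 * α - 2) * ffun α t⁻¹ := by
  rcases eq_or_ne t 1 with rfl | ht1
  · simp
  have hden : t ^ 2 - 1 ≠ 0 := fun h => ht1 (by nlinarith)
  have hden' : 1 - t ^ 2 ≠ 0 := fun h => ht1 (by nlinarith)
  have hscale (x y : ℝ) (hx : 0 ≤ x) (hxy : t * x = y) :
      t ^ (4 * α - 2) * x ^ (4 * α - 2) = y ^ (4 * α - 2) := by
    rw [← mul_rpow ht.le hx, hxy]
  have e1 := hscale |t⁻¹ - 1| |t - 1| (abs_nonneg _) (by
    rw [← abs_of_pos ht, ← abs_mul, abs_of_pos ht, mul_sub, mul_inv_cancel₀ ht.ne', abs_sub_comm,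
      mul_one])
  have e2 := hscale (t⁻¹ + 1) (t + 1) (by positivity) (by field_simp; ring)
  have e3 : t ^ (4 * α - 2) *
      (2 * ((t⁻¹) ^ 2 + 1) * ((t⁻¹) ^ (2 * α) - 1) ^ 2 / ((t⁻¹) ^ 2 - 1) ^ 2) =
      2 * (t ^ 2 + 1) * (t ^ (2 * α) - 1) ^ 2 / (t ^ 2 - 1) ^ 2 := by
    have hu : t ^ (2 * α) ≠ 0 := (rpow_pos_of_pos ht _).ne'
    rw [show 4 * α - 2 = 2 * α * 2 - 2 by ring, rpow_sub ht, rpow_mul ht.le, inv_rpow ht.le]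
    norm_cast
    rw [inv_pow, show (t ^ 2)⁻¹ - 1 = (1 - t ^ 2) / t ^ 2 by field_simp]
    field_simp
    ring
  unfold ffun
  linear_combination -e1 - e2 + e3

lemma ffun_le_of_two_lt {α : ℝ} (hα0 : 0 ≤ α) (hα1 : α ≤ 1) {t : ℝ} (ht : 2 < t) :
    ffun α t ≤ 100 * t ^ (2 * α - 2) := by
  have ht0 : 0 < t := by linarith
  have hinv : t⁻¹ < 1 / 2 := by rw [one_div]; exact inv_strictAnti₀ two_pos ht
  calc ffun α t = t ^ (4 * α - 2) * ffun α t⁻¹ := ffun_eq_rpow_mul_ffun_inv α ht0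
    _ ≤ t ^ (4 * α - 2) * (100 * t⁻¹ ^ (2 * α)) := by
      gcongr
      exact ffun_le_of_lt_half hα0 hα1 (inv_pos.2 ht0) hinv
    _ = 100 * t ^ (2 * α - 2) := by
      rw [inv_rpow ht0.le, ← rpow_neg ht0.le, mul_left_comm, ← rpow_add ht0]
      ring_nf

lemma ffun_le_rpow_add_rpow (α t : ℝ) :
    ffun α t ≤ |t - 1| ^ (4 * α - 2) + (t + 1) ^ (4 * α - 2) := by
  unfold ffun
  have : 0 ≤ 2 * (t ^ 2 + 1) * (t ^ (2 * α) - 1) ^ 2 / (t ^ 2 - 1) ^ 2 := by positivity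
  linarith

lemma ffun_le_two_mul_rpow_abs_sub_one {α : ℝ} (hα : α ≤ 1 / 2) {t : ℝ} (ht0 : 0 ≤ t)
    (ht2 : t ≤ 2) (ht1 : t ≠ 1) : ffun α t ≤ 2 * |t - 1| ^ (4 * α - 2) := by
  have hnear : 1 ≤ |t - 1| ^ (4 * α - 2) :=
    one_le_rpow_of_pos_of_le_one_of_nonpos (abs_pos.2 (sub_ne_zero.2 ht1))
      (abs_le.2 ⟨by linarith, by linarith⟩) (by linarith)
  have hfar : (t + 1) ^ (4 * α - 2) ≤ 1 :=
    rpow_le_one_of_one_le_of_nonpos (by linarith) (by linarith)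
  linarith [ffun_le_rpow_add_rpow α t]

lemma two_rpow_four_mul_sub_two_lt {α : ℝ} (h0 : 1 / 2 < α) (h1 : α < 1) :
    (2 : ℝ) ^ (4 * α - 2) < 4 * α ^ 2 := by
  have hbern : (2 : ℝ) ^ (2 * α - 1) < 2 * α := by
    have := rpow_one_add_lt_one_add_mul_self (s := 1) (by norm_num) one_ne_zero
      (p := 2 * α - 1) (by linarith) (by linarith)
    norm_num at this
    linarith
  have hpos : (0 : ℝ) < 2 ^ (2 * α - 1) := by positivity
  rw [show 4 * α - 2 = (2 * α - 1) * 2 by ring, rpow_mul zero_le_two]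
  norm_cast
  nlinarith

lemma tendsto_ffun_nhdsNE_one {α : ℝ} (hα : 1 / 2 < α) :
    Tendsto (ffun α) (𝓝[≠] 1) (𝓝 ((2 : ℝ) ^ (4 * α - 2) - 4 * α ^ 2)) := by
  have hp : 0 < 4 * α - 2 := by linarith
  have habs : Tendsto (fun t : ℝ => |t - 1| ^ (4 * α - 2)) (𝓝 1) (𝓝 0) := by
    have : ContinuousAt (fun t : ℝ => |t - 1| ^ (4 * α - 2)) 1 :=
      ContinuousAt.rpow_const (by fun_prop) (Or.inr hp.le)
    simpa [zero_rpow hp.ne'] using this.tendsto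
  have hadd : Tendsto (fun t : ℝ => (t + 1) ^ (4 * α - 2)) (𝓝 1) (𝓝 (2 ^ (4 * α - 2))) := by
    have : ContinuousAt (fun t : ℝ => (t + 1) ^ (4 * α - 2)) 1 :=
      ContinuousAt.rpow_const (by fun_prop) (Or.inl (by norm_num))
    simpa [one_add_one_eq_two] using this.tendsto
  have hslope : Tendsto (fun t : ℝ => (t ^ (2 * α) - 1) / (t - 1)) (𝓝[≠] 1) (𝓝 (2 * α)) := by
    have hd : HasDerivAt (fun x : ℝ => x ^ (2 * α)) (2 * α) 1 := by
      simpa using hasDerivAt_rpow_const (x := 1) (p := 2 * α) (Or.inl one_ne_zero)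
    exact (hasDerivAt_iff_tendsto_slope.1 hd).congr fun t => by rw [slope_def_field, one_rpow]
  have hweight : Tendsto (fun t : ℝ => 2 * (t ^ 2 + 1) / (t + 1) ^ 2) (𝓝 1) (𝓝 1) := by
    have : ContinuousAt (fun t : ℝ => 2 * (t ^ 2 + 1) / (t + 1) ^ 2) 1 :=
      ContinuousAt.div (by fun_prop) (by fun_prop) (by norm_num)
    convert this.tendsto using 2
    norm_num
  have hlim := (habs.mono_left nhdsWithin_le_nhds).add (hadd.mono_left nhdsWithin_le_nhds)
    |>.sub ((hweight.mono_left nhdsWithin_le_nhds).mul (hslope.pow 2))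
  rw [show (2 : ℝ) ^ (4 * α - 2) - 4 * α ^ 2 = 0 + 2 ^ (4 * α - 2) - 1 * (2 * α) ^ 2 by ring]
  refine hlim.congr' ?_
  filter_upwards [self_mem_nhdsWithin, nhdsWithin_le_nhds (Ioi_mem_nhds zero_lt_one)]
    with t (ht1 : t ≠ 1) (ht0 : 0 < t)
  have : t - 1 ≠ 0 := sub_ne_zero.2 ht1
  have : t ^ 2 - 1 ≠ 0 := fun h => ht1 (by nlinarith)
  unfold ffun
  field_simp
  ring

lemma exists_ffun_le_mul_rpow_abs_sub_one_of_half_lt {α : ℝ} (h0 : 1 / 2 < α) (h1 : α < 1) :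
    ∃ C > 0, ∀ t : ℝ, 0 ≤ t → t ≤ 2 → t ≠ 1 → ffun α t ≤ C * |t - 1| ^ (4 * α - 2) := by
  have hneg : ∀ᶠ t in 𝓝[≠] 1, ffun α t < 0 :=
    (tendsto_ffun_nhdsNE_one h0).eventually_lt_const
      (sub_neg.2 (two_rpow_four_mul_sub_two_lt h0 h1))
  obtain ⟨ε, hε, hneg⟩ : ∃ ε > 0, ∀ t : ℝ, dist t 1 < ε → t ≠ 1 → ffun α t < 0 := by
    simpa only [eventually_nhdsWithin_iff, Metric.eventually_nhds_iff, mem_compl_singleton_iff]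
      using hneg
  have hp : 0 ≤ 4 * α - 2 := by linarith
  refine ⟨1 + (3 / ε) ^ (4 * α - 2), by positivity, fun t ht0 ht2 ht1 => ?_⟩
  rcases lt_or_ge |t - 1| ε with hnear | hfar
  · exact (hneg t hnear ht1).le.trans (by positivity)
  have h3 : t + 1 ≤ 3 / ε * |t - 1| := calc
    t + 1 ≤ 3 / ε * ε := by field_simp; linarith
    _ ≤ 3 / ε * |t - 1| := by gcongr
  calc ffun α t ≤ |t - 1| ^ (4 * α - 2) + (t + 1) ^ (4 * α - 2) := ffun_le_rpow_add_rpow α t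
    _ ≤ |t - 1| ^ (4 * α - 2) + (3 / ε * |t - 1|) ^ (4 * α - 2) := by gcongr
    _ = (1 + (3 / ε) ^ (4 * α - 2)) * |t - 1| ^ (4 * α - 2) := by
      rw [mul_rpow (by positivity) (abs_nonneg _)]
      ring

lemma exists_ffun_le_mul_rpow_abs_sub_one {α : ℝ} (hα1 : α < 1) (hα : α ≠ 1 / 2) :
    ∃ C > 0, ∀ t : ℝ, 0 ≤ t → t ≤ 2 → t ≠ 1 → ffun α t ≤ C * |t - 1| ^ (4 * α - 2) := by
  rcases hα.lt_or_gt with hlt | hgt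
  · exact ⟨2, two_pos, fun t ht0 ht2 ht1 => ffun_le_two_mul_rpow_abs_sub_one hlt.le ht0 ht2 ht1⟩
  · exact exists_ffun_le_mul_rpow_abs_sub_one_of_half_lt hgt hα1

/-- Pointwise bounds for `f`: `f(t) ≤ C·t^{2α}` for `t < 1/2`,
`f(t) ≤ C·|t−1|^{4α−2}` for `t ∈ [1/2,2]∖{1}`, and `f(t) ≤ C·t^{2α−2}` for `t > 2`. -/
theorem stmt17 (α : ℝ) (hα0 : 0 ≤ α) (hα1 : α < 1) (hα : α ≠ 1 / 2) :
    ∃ C > (0 : ℝ),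
      (∀ t : ℝ, 0 < t → t < 1 / 2 → ffun α t ≤ C * t ^ (2 * α)) ∧
      (∀ t : ℝ, 1 / 2 ≤ t → t ≤ 2 → t ≠ 1 →
        ffun α t ≤ C * |t - 1| ^ (4 * α - 2)) ∧
      (∀ t : ℝ, 2 < t → ffun α t ≤ C * t ^ (2 * α - 2)) := by
  obtain ⟨C, hC, hmid⟩ := exists_ffun_le_mul_rpow_abs_sub_one hα1 hα
  refine ⟨max C 100, by positivity, fun t ht0 ht => ?_, fun t ht0 ht2 ht1 => ?_, fun t ht => ?_⟩
  · exact (ffun_le_of_lt_half hα0 hα1.le ht0 ht).trans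
      (by gcongr; exact le_max_right _ _)
  · exact (hmid t (by linarith) ht2 ht1).trans (by gcongr; exact le_max_left _ _)
  · exact (ffun_le_of_two_lt hα0 hα1.le ht).trans
      (by gcongr; exact le_max_right _ _)
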